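/- arXiv:1601.03975 — 8 statements merged into one kernel-verified Lean document; each statement's English description precedes it below -/
import Mathlib

section
/- Let E be a finite-dimensional real vector space, b : E × E → ℝ a symmetric positive-definite bilinear form, W ⊆ E a linear subspace, and Ŵ := {σ ∈ E : b(σ, w) = 0 for all w ∈ W} its b-orthogonal complement. Let f : E → ℝ be a function of the form f(p) = C(p,p,p) + L(p), where C : E × E × E → ℝ is a trilinear map and L : E → ℝ is a linear map. Then the following are equivalent: (i) there exist functions y : E → E and μ : E → ℝ such that for every p ∈ E one has y(p) ∈ W, μ(p) ≥ 0, and b(y(p), p) = −μ(p) − f(p); (ii) f(σ) = 0 for every σ ∈ Ŵ. (This is the algebraic content of Theorem 5 ('ssi') of the paper: a solution of the Lyapunov-constraint equation exists for some non-negative μ if and only if the Poisson bracket {Ĥ,H}, which is cubic-plus-linear in the momentum, vanishes on Ŵ.) -/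
/-- For a finite-dimensional real vector space `E` with a symmetric
positive-definite bilinear form `b`, a subspace `W`, its `b`-orthogonal complement
`Ŵ = {σ | ∀ w ∈ W, b σ w = 0}`, and a function `f p = C p p p + L p` (cubic plus linear),
the Lyapunov-constraint equation `b (y p) p = -μ p - f p` with `y p ∈ W`, `μ p ≥ 0`
admits a solution `(y, μ)` if and only if `f` vanishes on `Ŵ`. -/
theorem lyapunov_constraint_solvable_iff_vanishes_on_orthogonal
    (E : Type*) [AddCommGroup E] [Module ℝ E] [FiniteDimensional ℝ E]
    (b : E →ₗ[ℝ] E →ₗ[ℝ] ℝ)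
    (hb_symm : ∀ x y : E, b x y = b y x)
    (hb_pos : ∀ x : E, x ≠ 0 → 0 < b x x)
    (W : Submodule ℝ E)
    (C : E →ₗ[ℝ] E →ₗ[ℝ] E →ₗ[ℝ] ℝ) (L : E →ₗ[ℝ] ℝ)
    (f : E → ℝ) (hf : ∀ p : E, f p = C p p p + L p) :
    (∃ (y : E → E) (μ : E → ℝ),
        ∀ p : E, y p ∈ W ∧ 0 ≤ μ p ∧ b (y p) p = -μ p - f p)
      ↔ (∀ σ : E, (∀ w ∈ W, b σ w = 0) → f σ = 0) := by
  have hodd : ∀ p : E, f (-p) = -f p := by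
    intro p; simp [hf]; ring
  constructor
  · rintro ⟨y, μ, hy⟩ σ hσ
    have key : ∀ τ : E, (∀ w ∈ W, b τ w = 0) → f τ ≤ 0 := by
      intro τ hτ
      obtain ⟨hyW, hμ, heq⟩ := hy τ
      have : b (y τ) τ = 0 := by rw [hb_symm]; exact hτ _ hyW
      linarith [heq ▸ this]
    have h1 := key σ hσ
    have h2 := key (-σ) (fun w hw => by simp [hσ w hw])
    rw [hodd] at h2
    linarith
  · intro hvanish
    -- orthogonal decomposition via BilinForm machinery
    have hrefl : LinearMap.BilinForm.IsRefl (b : LinearMap.BilinForm ℝ E) := fun x y h => by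
      rw [hb_symm]; exact h
    have hdisj : Disjoint W (LinearMap.BilinForm.orthogonal b W) := by
      rw [Submodule.disjoint_def]
      intro x hxW hxO
      by_contra hx
      exact absurd (hxO x hxW) (ne_of_gt (hb_pos x hx))
    have hcompl : IsCompl W (LinearMap.BilinForm.orthogonal b W) :=
      (LinearMap.BilinForm.isCompl_orthogonal_iff_disjoint hrefl).mpr hdisj
    -- for each p choose w ∈ W, σ ∈ orth with p = w + σ
    have hdecomp : ∀ p : E, ∃ w ∈ W, ∃ σ ∈ LinearMap.BilinForm.orthogonal b W,
        p = w + σ := by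
      intro p
      have : p ∈ W ⊔ LinearMap.BilinForm.orthogonal b W := by
        rw [hcompl.sup_eq_top]; trivial
      rcases Submodule.mem_sup.mp this with ⟨w, hw, σ, hσ, h⟩
      exact ⟨w, hw, σ, hσ, h.symm⟩
    choose w hwW σ hσO hsum using hdecomp
    refine ⟨fun p => (-(f p) / b (w p) (w p)) • w p, fun _ => 0, fun p => ?_⟩
    refine ⟨Submodule.smul_mem _ _ (hwW p), le_refl 0, ?_⟩
    have hσw : b (σ p) (w p) = 0 := by
      have := hσO p (w p) (hwW p)
      rw [hb_symm]; exact this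
    have hbp : b (w p) p = b (w p) (w p) := by
      have h := congrArg (b (w p)) (hsum p)
      rw [map_add, hb_symm (w p) (σ p), hσw, add_zero] at h
      exact h
    by_cases hw0 : w p = 0
    · -- then p = σ p ∈ orth, so f p = 0
      have hpσ : p = σ p := by
        have h := hsum p; rw [hw0, zero_add] at h; exact h
      have : f p = 0 := by
        apply hvanish
        intro v hv
        rw [hpσ, hb_symm]
        exact hσO p v hv
      simp [hw0, this]
    · have hww : b (w p) (w p) ≠ 0 := ne_of_gt (hb_pos _ hw0)
      rw [map_smul, LinearMap.smul_apply, hbp, smul_eq_mul, div_mul_cancel₀ _ hww]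
      ring
end

section
/- Let n be a natural number. For a C¹ function M : ℝⁿ → Matrix (Fin n) (Fin n) ℝ taking symmetric values and a C¹ function h : ℝⁿ → ℝ, define the simple Hamiltonian H : ℝⁿ × ℝⁿ → ℝ by H(q,p) = ½ ∑_{i,j} p_i M^{ij}(q) p_j + h(q); similarly define Ĥ from symmetric C¹ matrix-valued M̂ and C¹ function ĥ. Define the canonical Poisson bracket {Ĥ,H}(q,p) = ∑_i (∂Ĥ/∂q^i ∂H/∂p_i − ∂H/∂q^i ∂Ĥ/∂p_i). Suppose there are given: a family of subspaces W(q) ⊆ ℝⁿ (for q ∈ ℝⁿ), a function μ : ℝⁿ × ℝⁿ → ℝ with μ(q,p) ≥ 0 for all (q,p), and a map y : ℝⁿ × ℝⁿ → ℝⁿ such that for all (q,p): y(q,p) ∈ W(q) and ⟨y(q,p), M̂(q)p⟩ = −μ(q,p) − {Ĥ,H}(q,p), where ⟨·,·⟩ is the Euclidean inner product. Then for every q ∈ ℝⁿ and every σ ∈ ℝⁿ such that M̂(q)σ is Euclidean-orthogonal to W(q), one has {Ĥ,H}(q,σ) = 0. -/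
open scoped BigOperators

/-- The simple Hamiltonian `H(q,p) = ½ ∑_{i,j} pᵢ M^{ij}(q) pⱼ + h(q)` on `ℝⁿ × ℝⁿ`. -/
noncomputable def simpleHam (n : ℕ) (M : (Fin n → ℝ) → Matrix (Fin n) (Fin n) ℝ)
    (h : (Fin n → ℝ) → ℝ) : (Fin n → ℝ) × (Fin n → ℝ) → ℝ :=
  fun x => (1 / 2) * (∑ i, ∑ j, x.2 i * M x.1 i j * x.2 j) + h x.1

/-- The canonical Poisson bracket
`{F,G}(q,p) = ∑ᵢ (∂F/∂qⁱ ∂G/∂pᵢ − ∂G/∂qⁱ ∂F/∂pᵢ)` on `ℝⁿ × ℝⁿ`. -/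
noncomputable def poissonBracket (n : ℕ) (F G : (Fin n → ℝ) × (Fin n → ℝ) → ℝ)
    (x : (Fin n → ℝ) × (Fin n → ℝ)) : ℝ :=
  ∑ i, (fderiv ℝ F x (Pi.single i 1, 0) * fderiv ℝ G x (0, Pi.single i 1)
      - fderiv ℝ G x (Pi.single i 1, 0) * fderiv ℝ F x (0, Pi.single i 1))

/-!
The bracket of two Hamiltonians that are even in the momentum is odd in the momentum, since
`∂/∂q` keeps and `∂/∂p` flips the sign under `p ↦ -p`. Applying the constraint equation at
`(q, σ)` and `(q, -σ)`, where the pairing with `y` vanishes by orthogonality, gives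
`{Ĥ,H}(q,σ) = -μ(q,σ) ≤ 0` and `-{Ĥ,H}(q,σ) = -μ(q,-σ) ≤ 0`.
-/

section MomentumReflection

variable {𝕜 E F G : Type*} [NontriviallyNormedField 𝕜] [NormedAddCommGroup E] [NormedSpace 𝕜 E]
  [NormedAddCommGroup F] [NormedSpace 𝕜 F] [NormedAddCommGroup G] [NormedSpace 𝕜 G]

theorem fderiv_apply_map_of_comp_eq {f : E → G} (L : E ≃L[𝕜] E) (hf : f ∘ L = f) (x v : E) :
    fderiv 𝕜 f (L x) (L v) = fderiv 𝕜 f x v := by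
  conv_rhs => rw [← hf, L.comp_right_fderiv]
  rfl

theorem fderiv_apply_of_even_snd {f : E × F → G} (hf : ∀ q p, f (q, -p) = f (q, p))
    (q : E) (p : F) (u : E) (v : F) :
    fderiv 𝕜 f (q, -p) (u, -v) = fderiv 𝕜 f (q, p) (u, v) :=
  fderiv_apply_map_of_comp_eq (f := f) ((ContinuousLinearEquiv.refl 𝕜 E).prodCongr (.neg 𝕜))
    (funext fun x : E × F => hf x.1 x.2) (q, p) (u, v)

theorem fderiv_inl_of_even_snd {f : E × F → G} (hf : ∀ q p, f (q, -p) = f (q, p))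
    (q : E) (p : F) (u : E) :
    fderiv 𝕜 f (q, -p) (u, 0) = fderiv 𝕜 f (q, p) (u, 0) := by
  simpa using fderiv_apply_of_even_snd hf q p u 0

theorem fderiv_inr_of_even_snd {f : E × F → G} (hf : ∀ q p, f (q, -p) = f (q, p))
    (q : E) (p : F) (v : F) :
    fderiv 𝕜 f (q, -p) (0, v) = -fderiv 𝕜 f (q, p) (0, v) := by
  rw [← fderiv_apply_of_even_snd hf q p 0 v, ← map_neg, Prod.neg_mk, neg_zero, neg_neg]

end MomentumReflection

theorem poissonBracket_neg_snd_of_even {n : ℕ} {F G : (Fin n → ℝ) × (Fin n → ℝ) → ℝ}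
    (hF : ∀ q p, F (q, -p) = F (q, p)) (hG : ∀ q p, G (q, -p) = G (q, p)) (q p : Fin n → ℝ) :
    poissonBracket n F G (q, -p) = -poissonBracket n F G (q, p) := by
  simp only [poissonBracket, fderiv_inl_of_even_snd hF, fderiv_inl_of_even_snd hG,
    fderiv_inr_of_even_snd hF, fderiv_inr_of_even_snd hG, ← Finset.sum_neg_distrib]
  exact Finset.sum_congr rfl fun i _ => by ring

theorem simpleHam_neg_snd (n : ℕ) (M : (Fin n → ℝ) → Matrix (Fin n) (Fin n) ℝ)
    (h : (Fin n → ℝ) → ℝ) (q p : Fin n → ℝ) :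
    simpleHam n M h (q, -p) = simpleHam n M h (q, p) := by
  simp only [simpleHam, Pi.neg_apply, neg_mul, mul_neg, neg_neg]

theorem poisson_bracket_vanishes_on_orthogonal_general
    (n : ℕ)
    (M Mhat : (Fin n → ℝ) → Matrix (Fin n) (Fin n) ℝ)
    (h hhat : (Fin n → ℝ) → ℝ)
    (W : (Fin n → ℝ) → Submodule ℝ (Fin n → ℝ))
    (μ : (Fin n → ℝ) × (Fin n → ℝ) → ℝ)
    (y : (Fin n → ℝ) × (Fin n → ℝ) → (Fin n → ℝ))
    (hμ : ∀ x, 0 ≤ μ x)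
    (hyW : ∀ x, y x ∈ W x.1)
    (hy : ∀ x, (∑ i, y x i * (Mhat x.1).mulVec x.2 i)
        = -μ x - poissonBracket n (simpleHam n Mhat hhat) (simpleHam n M h) x) :
    ∀ (q σ : Fin n → ℝ),
      (∀ w ∈ W q, (∑ i, (Mhat q).mulVec σ i * w i) = 0) →
      poissonBracket n (simpleHam n Mhat hhat) (simpleHam n M h) (q, σ) = 0 := by
  intro q σ horth
  have bracket_eq_neg_μ : ∀ p, (∀ w ∈ W q, (∑ i, (Mhat q).mulVec p i * w i) = 0) →
      poissonBracket n (simpleHam n Mhat hhat) (simpleHam n M h) (q, p) = -μ (q, p) := by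
    intro p hp
    have hpair : ∑ i, y (q, p) i * (Mhat q).mulVec p i = 0 := by
      rw [← hp _ (hyW (q, p))]
      exact Finset.sum_congr rfl fun i _ => mul_comm _ _
    linarith [hy (q, p)]
  have hσ := bracket_eq_neg_μ σ horth
  have hnegσ := bracket_eq_neg_μ (-σ) fun w hw => by
    simp [Matrix.mulVec_neg, horth w hw]
  rw [poissonBracket_neg_snd_of_even (simpleHam_neg_snd n Mhat hhat)
    (simpleHam_neg_snd n M h)] at hnegσ
  linarith [hμ (q, σ), hμ (q, -σ)]

/-- if the Lyapunov constraint equation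
`⟨y(q,p), M̂(q)p⟩ = −μ(q,p) − {Ĥ,H}(q,p)` with `y(q,p) ∈ W(q)` and `μ ≥ 0` has a
solution, then `{Ĥ,H}(q,σ) = 0` whenever `M̂(q)σ` is Euclidean-orthogonal to `W(q)`. -/
theorem poisson_bracket_vanishes_on_orthogonal
    (n : ℕ)
    (M Mhat : (Fin n → ℝ) → Matrix (Fin n) (Fin n) ℝ)
    (h hhat : (Fin n → ℝ) → ℝ)
    (hM : ∀ i j, ContDiff ℝ 1 fun q => M q i j)
    (hMhat : ∀ i j, ContDiff ℝ 1 fun q => Mhat q i j)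
    (hMsymm : ∀ q i j, M q i j = M q j i)
    (hMhatsymm : ∀ q i j, Mhat q i j = Mhat q j i)
    (hh : ContDiff ℝ 1 h) (hhhat : ContDiff ℝ 1 hhat)
    (W : (Fin n → ℝ) → Submodule ℝ (Fin n → ℝ))
    (μ : (Fin n → ℝ) × (Fin n → ℝ) → ℝ)
    (y : (Fin n → ℝ) × (Fin n → ℝ) → (Fin n → ℝ))
    (hμ : ∀ x, 0 ≤ μ x)
    (hyW : ∀ x, y x ∈ W x.1)
    (hy : ∀ x, (∑ i, y x i * (Mhat x.1).mulVec x.2 i)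
        = -μ x - poissonBracket n (simpleHam n Mhat hhat) (simpleHam n M h) x) :
    ∀ (q σ : Fin n → ℝ),
      (∀ w ∈ W q, (∑ i, (Mhat q).mulVec σ i * w i) = 0) →
      poissonBracket n (simpleHam n Mhat hhat) (simpleHam n M h) (q, σ) = 0 :=
  poisson_bracket_vanishes_on_orthogonal_general n M Mhat h hhat W μ y hμ hyW hy
end

section
/- Let n be a natural number, and let H(q,p) = ½ ∑_{i,j} p_i M^{ij}(q) p_j + h(q) and Ĥ(q,p) = ½ ∑_{i,j} p_i M̂^{ij}(q) p_j + ĥ(q) be simple Hamiltonians on ℝⁿ × ℝⁿ (M, M̂ symmetric-valued C¹, h, ĥ C¹). Suppose there are a family of subspaces W(q) ⊆ ℝⁿ, a function μ : ℝⁿ × ℝⁿ → ℝ with μ ≥ 0, and a map y : ℝⁿ × ℝⁿ → ℝⁿ such that for all (q,p): y(q,p) ∈ W(q) and ⟨y(q,p), M̂(q)p⟩ = −μ(q,p) − {Ĥ,H}(q,p). Then for every q ∈ ℝⁿ and every σ ∈ ℝⁿ with M̂(q)σ Euclidean-orthogonal to W(q), the simple matching conditions hold: ∑_{i,j,k,l}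 (∂M̂^{ij}/∂q^k (q) · M^{kl}(q) − ∂M^{ij}/∂q^k (q) · M̂^{kl}(q)) σ_i σ_j σ_l = 0 (kinetic matching condition) and ∑_{k,l} (∂ĥ/∂q^k (q) · M^{kl}(q) − ∂h/∂q^k (q) · M̂^{kl}(q)) σ_l = 0 (potential matching condition). -/
/-!
Along the ray `p = tσ` the left side of the Lyapunov equation vanishes, because `y ∈ W(q)` and
`M̂(q)(tσ) ⊥ W(q)`; hence `{Ĥ,H}(q,tσ) = -μ ≤ 0` for every `t`. On the other hand
`{Ĥ,H}(q,p) = ½ K(q,p) + P(q,p)`, where `K` (kinetic) is cubic and `P` (potential) is linear in `p`.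
So `t ↦ ½ K(q,σ) t³ + P(q,σ) t` is an odd function that is nowhere positive, hence zero, and both
coefficients vanish.
-/

open scoped BigOperators

theorem odd_cubic_coeffs_eq_zero_of_nonpos {a b : ℝ} (hab : ∀ t : ℝ, a * t ^ 3 + b * t ≤ 0) :
    a = 0 ∧ b = 0 := by
  have h1 := hab 1
  have h1' := hab (-1)
  have h2 := hab 2
  have h2' := hab (-2)
  constructor <;> nlinarith

section SimpleHam

variable {n : ℕ} {M : (Fin n → ℝ) → Matrix (Fin n) (Fin n) ℝ} {h : (Fin n → ℝ) → ℝ} {q : Fin n → ℝ}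

theorem fderiv_simpleHam_apply (hM : ∀ i j, DifferentiableAt ℝ (fun q' => M q' i j) q)
    (hh : DifferentiableAt ℝ h q) (p v w : Fin n → ℝ) :
    fderiv ℝ (simpleHam n M h) (q, p) (v, w) =
      1 / 2 * ∑ i, ∑ j, (w i * M q i j * p j + p i * fderiv ℝ (fun q' => M q' i j) q v * p j
        + p i * M q i j * w j) + fderiv ℝ h q v := by
  have hp : ∀ i, HasFDerivAt (fun x : (Fin n → ℝ) × (Fin n → ℝ) => x.2 i)
      ((ContinuousLinearMap.proj i).comp (ContinuousLinearMap.snd ℝ _ _)) (q, p) := fun i =>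
    ((ContinuousLinearMap.proj i).comp (ContinuousLinearMap.snd ℝ _ _)).hasFDerivAt (x := (q, p))
  have hMq : ∀ i j, HasFDerivAt (fun x : (Fin n → ℝ) × (Fin n → ℝ) => M x.1 i j)
      ((fderiv ℝ (fun q' => M q' i j) q).comp (ContinuousLinearMap.fst ℝ _ _)) (q, p) :=
    fun i j => (hM i j).hasFDerivAt.comp (f := Prod.fst) (q, p) hasFDerivAt_fst
  have hH : HasFDerivAt (simpleHam n M h) _ (q, p) :=
    ((HasFDerivAt.fun_sum fun i _ => HasFDerivAt.fun_sum fun j _ =>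
      ((hp i).mul (hMq i j)).mul (hp j)).const_mul (1 / 2)).add
      (hh.hasFDerivAt.comp (q, p) hasFDerivAt_fst)
  rw [hH.fderiv]
  simp only [add_apply, smul_apply, FunLike.coe_sum, Finset.sum_apply, ContinuousLinearMap.coe_comp,
    Function.comp_apply, ContinuousLinearMap.proj_apply, ContinuousLinearMap.coe_fst',
    ContinuousLinearMap.coe_snd', smul_eq_mul, Pi.mul_apply]
  congr 2
  exact Finset.sum_congr rfl fun i _ => Finset.sum_congr rfl fun j _ => by ring

theorem fderiv_simpleHam_apply_inl (hM : ∀ i j, DifferentiableAt ℝ (fun q' => M q' i j) q)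
    (hh : DifferentiableAt ℝ h q) (p v : Fin n → ℝ) :
    fderiv ℝ (simpleHam n M h) (q, p) (v, 0) =
      1 / 2 * ∑ i, ∑ j, p i * fderiv ℝ (fun q' => M q' i j) q v * p j + fderiv ℝ h q v := by
  simp [fderiv_simpleHam_apply hM hh]

theorem fderiv_simpleHam_apply_inr_single (hM : ∀ i j, DifferentiableAt ℝ (fun q' => M q' i j) q)
    (hh : DifferentiableAt ℝ h q) (hMsymm : ∀ i j, M q i j = M q j i) (p : Fin n → ℝ) (k : Fin n) :
    fderiv ℝ (simpleHam n M h) (q, p) (0, Pi.single k 1) = ∑ l, M q k l * p l := by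
  simp only [fderiv_simpleHam_apply hM hh, Pi.single_apply, ite_mul, mul_ite, one_mul, mul_one,
    zero_mul, mul_zero, map_zero, add_zero, Finset.sum_add_distrib, Finset.sum_ite_irrel,
    Finset.sum_const_zero, Finset.sum_ite_eq', Finset.mem_univ, if_true, hMsymm _ k,
    mul_comm (p _) (M q k _)]
  ring

end SimpleHam

noncomputable def kineticMatchingForm {n : ℕ} (M Mhat : (Fin n → ℝ) → Matrix (Fin n) (Fin n) ℝ)
    (q σ : Fin n → ℝ) : ℝ :=
  ∑ i, ∑ j, ∑ k, ∑ l,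
    (fderiv ℝ (fun q' => Mhat q' i j) q (Pi.single k 1) * M q k l
      - fderiv ℝ (fun q' => M q' i j) q (Pi.single k 1) * Mhat q k l) * σ i * σ j * σ l

noncomputable def potentialMatchingForm {n : ℕ} (M Mhat : (Fin n → ℝ) → Matrix (Fin n) (Fin n) ℝ)
    (h hhat : (Fin n → ℝ) → ℝ) (q σ : Fin n → ℝ) : ℝ :=
  ∑ k, ∑ l, (fderiv ℝ hhat q (Pi.single k 1) * M q k l
    - fderiv ℝ h q (Pi.single k 1) * Mhat q k l) * σ l

theorem kineticMatchingForm_smul {n : ℕ} (M Mhat : (Fin n → ℝ) → Matrix (Fin n) (Fin n) ℝ)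
    (q σ : Fin n → ℝ) (t : ℝ) :
    kineticMatchingForm M Mhat q (t • σ) = t ^ 3 * kineticMatchingForm M Mhat q σ := by
  simp only [kineticMatchingForm, Pi.smul_apply, smul_eq_mul, Finset.mul_sum]
  exact Finset.sum_congr rfl fun i _ => Finset.sum_congr rfl fun j _ =>
    Finset.sum_congr rfl fun k _ => Finset.sum_congr rfl fun l _ => by ring

theorem potentialMatchingForm_smul {n : ℕ} (M Mhat : (Fin n → ℝ) → Matrix (Fin n) (Fin n) ℝ)
    (h hhat : (Fin n → ℝ) → ℝ) (q σ : Fin n → ℝ) (t : ℝ) :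
    potentialMatchingForm M Mhat h hhat q (t • σ) = t * potentialMatchingForm M Mhat h hhat q σ := by
  simp only [potentialMatchingForm, Pi.smul_apply, smul_eq_mul, Finset.mul_sum]
  exact Finset.sum_congr rfl fun k _ => Finset.sum_congr rfl fun l _ => by ring

theorem poissonBracket_simpleHam {n : ℕ} {M Mhat : (Fin n → ℝ) → Matrix (Fin n) (Fin n) ℝ}
    {h hhat : (Fin n → ℝ) → ℝ} {q : Fin n → ℝ}
    (hM : ∀ i j, DifferentiableAt ℝ (fun q' => M q' i j) q)
    (hMhat : ∀ i j, DifferentiableAt ℝ (fun q' => Mhat q' i j) q)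
    (hh : DifferentiableAt ℝ h q) (hhhat : DifferentiableAt ℝ hhat q)
    (hMsymm : ∀ i j, M q i j = M q j i) (hMhatsymm : ∀ i j, Mhat q i j = Mhat q j i)
    (p : Fin n → ℝ) :
    poissonBracket n (simpleHam n Mhat hhat) (simpleHam n M h) (q, p) =
      1 / 2 * kineticMatchingForm M Mhat q p + potentialMatchingForm M Mhat h hhat q p := by
  have hK : kineticMatchingForm M Mhat q p = ∑ k,
      ((∑ i, ∑ j, p i * fderiv ℝ (fun q' => Mhat q' i j) q (Pi.single k 1) * p j)
          * ∑ l, M q k l * p l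
        - (∑ i, ∑ j, p i * fderiv ℝ (fun q' => M q' i j) q (Pi.single k 1) * p j)
          * ∑ l, Mhat q k l * p l) := by
    simp only [Finset.sum_mul]
    simp only [Finset.mul_sum, ← Finset.sum_sub_distrib]
    rw [kineticMatchingForm]
    conv_lhs => enter [2, i]; rw [Finset.sum_comm]
    rw [Finset.sum_comm]
    exact Finset.sum_congr rfl fun k _ => Finset.sum_congr rfl fun i _ =>
      Finset.sum_congr rfl fun j _ => Finset.sum_congr rfl fun l _ => by ring
  have hP : potentialMatchingForm M Mhat h hhat q p = ∑ k,
      (fderiv ℝ hhat q (Pi.single k 1) * ∑ l, M q k l * p l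
        - fderiv ℝ h q (Pi.single k 1) * ∑ l, Mhat q k l * p l) := by
    simp only [potentialMatchingForm, Finset.mul_sum, ← Finset.sum_sub_distrib]
    exact Finset.sum_congr rfl fun k _ => Finset.sum_congr rfl fun l _ => by ring
  rw [poissonBracket, hK, hP, Finset.mul_sum, ← Finset.sum_add_distrib]
  refine Finset.sum_congr rfl fun k _ => ?_
  rw [fderiv_simpleHam_apply_inl hM hh, fderiv_simpleHam_apply_inl hMhat hhhat,
    fderiv_simpleHam_apply_inr_single hM hh hMsymm,
    fderiv_simpleHam_apply_inr_single hMhat hhhat hMhatsymm]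
  ring

/-- solvability of the Lyapunov constraint equation forces Chang's simple
(kinetic and potential) matching conditions on the subspace `{σ | M̂(q)σ ⊥ W(q)}`. -/
theorem lyapunov_solvable_implies_simple_matching_conditions
    (n : ℕ)
    (M Mhat : (Fin n → ℝ) → Matrix (Fin n) (Fin n) ℝ)
    (h hhat : (Fin n → ℝ) → ℝ)
    (hM : ∀ i j, ContDiff ℝ 1 fun q => M q i j)
    (hMhat : ∀ i j, ContDiff ℝ 1 fun q => Mhat q i j)
    (hMsymm : ∀ q i j, M q i j = M q j i)
    (hMhatsymm : ∀ q i j, Mhat q i j = Mhat q j i)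
    (hh : ContDiff ℝ 1 h) (hhhat : ContDiff ℝ 1 hhat)
    (W : (Fin n → ℝ) → Submodule ℝ (Fin n → ℝ))
    (μ : (Fin n → ℝ) × (Fin n → ℝ) → ℝ)
    (y : (Fin n → ℝ) × (Fin n → ℝ) → (Fin n → ℝ))
    (hμ : ∀ x, 0 ≤ μ x)
    (hyW : ∀ x, y x ∈ W x.1)
    (hy : ∀ x, (∑ i, y x i * (Mhat x.1).mulVec x.2 i)
        = -μ x - poissonBracket n (simpleHam n Mhat hhat) (simpleHam n M h) x) :
    ∀ (q σ : Fin n → ℝ),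
      (∀ w ∈ W q, (∑ i, (Mhat q).mulVec σ i * w i) = 0) →
      (∑ i, ∑ j, ∑ k, ∑ l,
          (fderiv ℝ (fun q' => Mhat q' i j) q (Pi.single k 1) * M q k l
            - fderiv ℝ (fun q' => M q' i j) q (Pi.single k 1) * Mhat q k l)
          * σ i * σ j * σ l) = 0
      ∧
      (∑ k, ∑ l,
          (fderiv ℝ hhat q (Pi.single k 1) * M q k l
            - fderiv ℝ h q (Pi.single k 1) * Mhat q k l)
          * σ l) = 0 := by
  intro q σ horth
  have hbracket : ∀ t : ℝ,
      1 / 2 * kineticMatchingForm M Mhat q σ * t ^ 3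
        + potentialMatchingForm M Mhat h hhat q σ * t ≤ 0 := by
    intro t
    have hlhs : ∑ i, y (q, t • σ) i * (Mhat q).mulVec (t • σ) i = 0 :=
      calc ∑ i, y (q, t • σ) i * (Mhat q).mulVec (t • σ) i
          = t * ∑ i, (Mhat q).mulVec σ i * y (q, t • σ) i := by
            simp only [Matrix.mulVec_smul, Pi.smul_apply, smul_eq_mul, Finset.mul_sum]
            exact Finset.sum_congr rfl fun i _ => by ring
        _ = 0 := by rw [horth _ (hyW (q, t • σ)), mul_zero]
    have hlyap := hy (q, t • σ)
    rw [hlhs, poissonBracket_simpleHam (fun i j => (hM i j).differentiable one_ne_zero q)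
      (fun i j => (hMhat i j).differentiable one_ne_zero q) (hh.differentiable one_ne_zero q)
      (hhhat.differentiable one_ne_zero q) (hMsymm q) (hMhatsymm q),
      kineticMatchingForm_smul, potentialMatchingForm_smul] at hlyap
    linarith [hμ (q, t • σ)]
  obtain ⟨hK, hP⟩ := odd_cubic_coeffs_eq_zero_of_nonpos hbracket
  exact ⟨(mul_eq_zero.1 hK).resolve_left (by norm_num), hP⟩
end

section
/- Let E be a real vector space that is the internal direct sum of two subspaces W and Ŵ (E = W ⊕ Ŵ). Let Υ : E × E × E → ℝ be a trilinear map that is symmetric in its first two arguments. Then the following are equivalent: (i) there exists a trilinear map Z : E × E × E → ℝ, symmetric in its first two arguments, such that Z(α,α,α) = 0 for all α ∈ E (the gyroscopic condition) and Z(α,α,σ) = Υ(α,α,σ) for all α ∈ E and σ ∈ Ŵ (the kinetic matching condition); (ii) Υ(σ,σ,σ) = 0 for all σ ∈ Ŵ. -/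
/-!
Pick a linear projection `P` onto `Ŵ`. Expanding `Υ(α,α,Pα)` with `α = (α - Pα) + Pα` gives a
trilinear `K` which agrees with `Υ` whenever its last argument lies in `Ŵ` and whose diagonal is
`α ↦ Υ(Pα,Pα,Pα)`, hence zero under (ii). Symmetrizing `K` in its first two arguments changes
neither property, and yields `Z`. Conversely `Υ(σ,σ,σ) = Z(σ,σ,σ) = 0` for `σ ∈ Ŵ`.
-/

open QuadraticMap LinearMap.BilinMap

section

variable {R M N : Type*} [CommRing R] [AddCommGroup M] [Module R M] [AddCommGroup N] [Module R N]

/-- The correction terms `T(c - Pc, b, Pa)` and `T(Pa, c - Pc, Pb)` vanish when `P c = c`, and on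
the diagonal they telescope `T(a,a,Pa)` down to `T(Pa,Pa,Pa)`. -/
def trilinearDiagComp (T : M →ₗ[R] M →ₗ[R] M →ₗ[R] N) (P : M →ₗ[R] M) :
    M →ₗ[R] M →ₗ[R] M →ₗ[R] N :=
  LinearMap.mk₂ R
    (fun a b => T a b ∘ₗ P - ((T.flip b).flip (P a) + (T (P a)).flip (P b)) ∘ₗ (LinearMap.id - P))
    (fun _ _ _ => by ext; simp only [map_add, LinearMap.add_apply, LinearMap.sub_apply,
      LinearMap.comp_apply, LinearMap.id_apply, LinearMap.flip_apply, map_sub]; abel)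
    (fun _ _ _ => by ext; simp [smul_sub])
    (fun _ _ _ => by ext; simp only [map_add, LinearMap.add_apply, LinearMap.sub_apply,
      LinearMap.comp_apply, LinearMap.id_apply, LinearMap.flip_apply, map_sub]; abel)
    (fun _ _ _ => by ext; simp [smul_sub])

variable (T : M →ₗ[R] M →ₗ[R] M →ₗ[R] N) (P : M →ₗ[R] M)

theorem trilinearDiagComp_apply (a b c : M) :
    trilinearDiagComp T P a b c = T a b (P c) - T (c - P c) b (P a) - T (P a) (c - P c) (P b) := by
  simp [trilinearDiagComp, sub_sub]

theorem trilinearDiagComp_apply_of_map_eq_self (a b : M) {c : M} (hc : P c = c) :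
    trilinearDiagComp T P a b c = T a b c := by
  simp [trilinearDiagComp_apply, hc]

theorem trilinearDiagComp_apply_self (a : M) :
    trilinearDiagComp T P a a a = T (P a) (P a) (P a) := by
  simp only [trilinearDiagComp_apply, map_sub, LinearMap.sub_apply]
  abel

end

theorem gyroscopic_solution_exists_iff_simple_kinetic_matching_general
    (E : Type*) [AddCommGroup E] [Module ℝ E]
    (What : Submodule ℝ E)
    (Y : E →ₗ[ℝ] E →ₗ[ℝ] E →ₗ[ℝ] ℝ) :
    (∃ Z : E →ₗ[ℝ] E →ₗ[ℝ] E →ₗ[ℝ] ℝ,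
        (∀ a b c : E, Z a b c = Z b a c) ∧
        (∀ a : E, Z a a a = 0) ∧
        (∀ a : E, ∀ σ ∈ What, Z a a σ = Y a a σ))
      ↔ (∀ σ ∈ What, Y σ σ σ = 0) := by
  constructor
  · rintro ⟨Z, -, hgyro, hmatch⟩ σ hσ
    rw [← hmatch σ σ hσ, hgyro]
  · intro hY
    obtain ⟨r, hr⟩ := What.subtype.exists_leftInverse_of_injective What.ker_subtype
    have hfix : ∀ σ ∈ What, What.subtype (r σ) = σ := fun σ hσ =>
      congr_arg Subtype.val (LinearMap.congr_fun hr ⟨σ, hσ⟩)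
    set K := trilinearDiagComp Y (What.subtype ∘ₗ r)
    refine ⟨associated (toQuadraticMap K), fun a b c => by rw [associated_isSymm], fun a => ?_,
      fun a σ hσ => ?_⟩
    · rw [associated_eq_self_apply, toQuadraticMap_apply, trilinearDiagComp_apply_self]
      exact hY _ (r a).2
    · rw [associated_eq_self_apply, toQuadraticMap_apply,
        trilinearDiagComp_apply_of_map_eq_self _ _ _ _ (hfix σ hσ)]

/-- for `E = W ⊕ Ŵ` and `Υ` trilinear and symmetric in its first two
arguments, there exists a trilinear `Z`, symmetric in its first two arguments, with
`Z(α,α,α) = 0` (gyroscopic condition) and `Z(α,α,σ) = Υ(α,α,σ)` for `σ ∈ Ŵ`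
(kinetic matching condition) if and only if `Υ(σ,σ,σ) = 0` for all `σ ∈ Ŵ`. -/
theorem gyroscopic_solution_exists_iff_simple_kinetic_matching
    (E : Type*) [AddCommGroup E] [Module ℝ E]
    (W What : Submodule ℝ E) (hcompl : IsCompl W What)
    (Y : E →ₗ[ℝ] E →ₗ[ℝ] E →ₗ[ℝ] ℝ)
    (hYsymm : ∀ a b c : E, Y a b c = Y b a c) :
    (∃ Z : E →ₗ[ℝ] E →ₗ[ℝ] E →ₗ[ℝ] ℝ,
        (∀ a b c : E, Z a b c = Z b a c) ∧
        (∀ a : E, Z a a a = 0) ∧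
        (∀ a : E, ∀ σ ∈ What, Z a a σ = Y a a σ))
      ↔ (∀ σ ∈ What, Y σ σ σ = 0) :=
  gyroscopic_solution_exists_iff_simple_kinetic_matching_general E What Y
end

section
/- Let E be a real vector space that is the internal direct sum of subspaces W and Ŵ, with projections π_W : E → W and π_Ŵ : E → Ŵ. Let Υ : E × E × E → ℝ be trilinear, symmetric in its first two arguments, and satisfy Υ(σ,σ,σ) = 0 for all σ ∈ Ŵ. Let A : W × W × Ŵ → ℝ be trilinear with A(γ₁,γ₂,σ) = −A(γ₂,γ₁,σ), and let B : W × W × W → ℝ be trilinear with B(γ₁,γ₂,γ₃) = B(γ₂,γ₁,γ₃) and B(γ,γ,γ) = 0 for all γ ∈ W. Define Z : E × E × E → ℝ by (writing γᵢ = π_W(αᵢ), σᵢ = π_Ŵ(αᵢ)): Z(α₁,α₂,α₃) = Υ(α₁,α₂,σ₃) − Υ(γ₃,σ₂,σ₁) − Υ(γ₃,σ₁,σ₂) − ½[Υ(γ₁,γ₃,σ₂) + A(γ₁,γ₃,σ₂)] − ½[Υ(γ₂,γ₃,σ₁) + A(γ₂,γ₃,σ₁)] + B(γ₁,γ₂,γ₃).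 Then Z is trilinear, symmetric in its first two arguments, satisfies Z(α,α,α) = 0 for all α ∈ E, and satisfies Z(α,α,σ) = Υ(α,α,σ) for all α ∈ E and σ ∈ Ŵ. -/
/-- soundness half of Chang's construction, Eqs. (Zg): given the splitting
`E = W ⊕ Ŵ` with projections `πW, πŴ`, a trilinear `Υ` symmetric in its first two
arguments with `Υ(σ,σ,σ) = 0` on `Ŵ`, a trilinear `A` on `W × W × Ŵ` antisymmetric in
its first two arguments, and a trilinear `B` on `W × W × W` symmetric in its first two
arguments with vanishing diagonal, the piecewise formula (Zg) defines a trilinear map `Z`,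
symmetric in its first two arguments, satisfying the gyroscopic condition `Z(α,α,α) = 0`
and the kinetic matching condition `Z(α,α,σ) = Υ(α,α,σ)` for `σ ∈ Ŵ`. -/
theorem chang_gyroscopic_tensor_construction
    (E : Type*) [AddCommGroup E] [Module ℝ E]
    (W What : Submodule ℝ E) (hcompl : IsCompl W What)
    (piW : E →ₗ[ℝ] W) (piWhat : E →ₗ[ℝ] What)
    (hproj : ∀ x : E, (piW x : E) + (piWhat x : E) = x)
    (Y : E →ₗ[ℝ] E →ₗ[ℝ] E →ₗ[ℝ] ℝ)
    (hYsymm : ∀ a b c : E, Y a b c = Y b a c)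
    (hY0 : ∀ σ ∈ What, Y σ σ σ = 0)
    (A : W →ₗ[ℝ] W →ₗ[ℝ] What →ₗ[ℝ] ℝ)
    (hA : ∀ (g1 g2 : W) (s : What), A g1 g2 s = -A g2 g1 s)
    (B : W →ₗ[ℝ] W →ₗ[ℝ] W →ₗ[ℝ] ℝ)
    (hBsymm : ∀ g1 g2 g3 : W, B g1 g2 g3 = B g2 g1 g3)
    (hB0 : ∀ g : W, B g g g = 0)
    (Z : E → E → E → ℝ)
    (hZ : ∀ a1 a2 a3 : E, Z a1 a2 a3 =
        Y a1 a2 (piWhat a3 : E)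
        - Y (piW a3 : E) (piWhat a2 : E) (piWhat a1 : E)
        - Y (piW a3 : E) (piWhat a1 : E) (piWhat a2 : E)
        - (1 / 2) * (Y (piW a1 : E) (piW a3 : E) (piWhat a2 : E)
            + A (piW a1) (piW a3) (piWhat a2))
        - (1 / 2) * (Y (piW a2 : E) (piW a3 : E) (piWhat a1 : E)
            + A (piW a2) (piW a3) (piWhat a1))
        + B (piW a1) (piW a2) (piW a3)) :
    (∀ b c : E, IsLinearMap ℝ fun a => Z a b c) ∧
    (∀ a c : E, IsLinearMap ℝ fun b => Z a b c) ∧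
    (∀ a b : E, IsLinearMap ℝ fun c => Z a b c) ∧
    (∀ a b c : E, Z a b c = Z b a c) ∧
    (∀ a : E, Z a a a = 0) ∧
    (∀ a : E, ∀ σ ∈ What, Z a a σ = Y a a σ) := by
  have hpiW0 : ∀ σ ∈ What, (piW σ : E) = 0 := by
    intro σ hσ
    have h1 : (piW σ : E) ∈ What := by
      have h := hproj σ
      have heq : (piW σ : E) = σ - (piWhat σ : E) := by
        rw [eq_sub_iff_add_eq]; exact h
      rw [heq]
      exact What.sub_mem hσ (piWhat σ).2
    have h2 : (piW σ : E) ∈ W ⊓ What := ⟨(piW σ).2, h1⟩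
    rw [hcompl.inf_eq_bot] at h2
    simpa using h2
  have hpiWhatid : ∀ σ ∈ What, (piWhat σ : E) = σ := by
    intro σ hσ
    have h := hproj σ
    rw [hpiW0 σ hσ, zero_add] at h
    exact h
  refine ⟨?_, ?_, ?_, ?_, ?_, ?_⟩
  · intro b c
    constructor
    · intro x y
      simp only [hZ, map_add, LinearMap.add_apply, Submodule.coe_add]
      ring
    · intro r x
      simp only [hZ, map_smul, LinearMap.smul_apply, Submodule.coe_smul, smul_eq_mul]
      ring
  · intro a c
    constructor
    · intro x y
      simp only [hZ, map_add, LinearMap.add_apply, Submodule.coe_add]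
      ring
    · intro r x
      simp only [hZ, map_smul, LinearMap.smul_apply, Submodule.coe_smul, smul_eq_mul]
      ring
  · intro a b
    constructor
    · intro x y
      simp only [hZ, map_add, LinearMap.add_apply, Submodule.coe_add]
      ring
    · intro r x
      simp only [hZ, map_smul, LinearMap.smul_apply, Submodule.coe_smul, smul_eq_mul]
      ring
  · intro a b c
    rw [hZ, hZ, hYsymm a b, hBsymm (piW a) (piW b)]
    ring
  · intro a
    rw [hZ]
    have hAa : A (piW a) (piW a) (piWhat a) = 0 := by
      have := hA (piW a) (piW a) (piWhat a); linarith
    have hBa := hB0 (piW a)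
    set gw : W := piW a with hgw
    set sw : What := piWhat a with hsw
    set g : E := (gw : E) with hg
    set s : E := (sw : E) with hs
    have hsW : s ∈ What := by rw [hs]; exact sw.2
    have ha : a = g + s := (hproj a).symm
    rw [ha]
    simp only [map_add, LinearMap.add_apply]
    rw [hY0 s hsW, hAa, hBa, hYsymm s g s]
    ring
  · intro a σ hσ
    rw [hZ, hpiWhatid σ hσ]
    have h0 : (piW σ : E) = 0 := hpiW0 σ hσ
    have h0' : piW σ = 0 := by ext; simpa using h0
    simp [h0, h0']
end

section
/- Let E be a real vector space that is the internal direct sum of subspaces W and Ŵ. Let Υ : E × E × E → ℝ be trilinear and symmetric in its first two arguments. Let Z : E × E × E → ℝ be any trilinear map that is symmetric in its first two arguments and satisfies Z(α,α,α) = 0 for all α ∈ E and Z(α,α,σ) = Υ(α,α,σ) for all α ∈ E and σ ∈ Ŵ. Then Z is determined on the direct-sum pieces as follows: (a) Z(α₁,α₂,σ) = Υ(α₁,α₂,σ) for all α₁, α₂ ∈ E, σ ∈ Ŵ; (b) Z(σ₁,σ₂,γ) = −Υ(γ,σ₂,σ₁) − Υ(γ,σ₁,σ₂) for all σ₁, σ₂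 ∈ Ŵ, γ ∈ W; (c) the trilinear map A : W × W × Ŵ → ℝ defined by the equation Z(γ₁,σ,γ₂) = −½[Υ(γ₁,γ₂,σ) + A(γ₁,γ₂,σ)] satisfies A(γ₁,γ₂,σ) = −A(γ₂,γ₁,σ); and (d) the restriction B of Z to W × W × W is symmetric in its first two arguments and satisfies B(γ,γ,γ) = 0 for all γ ∈ W. -/
/-- completeness half of Chang's construction: any trilinear `Z`,
symmetric in its first two arguments, with `Z(α,α,α) = 0` and `Z(α,α,σ) = Υ(α,α,σ)` for
`σ ∈ Ŵ`, is determined on the direct-sum pieces of `E = W ⊕ Ŵ`: (a) it equals `Υ` on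
`E × E × Ŵ`; (b) `Z(σ₁,σ₂,γ) = −Υ(γ,σ₂,σ₁) − Υ(γ,σ₁,σ₂)`; (c) the tensor
`A(γ₁,γ₂,σ) := −2 Z(γ₁,σ,γ₂) − Υ(γ₁,γ₂,σ)` is antisymmetric in `γ₁, γ₂`; and (d) the
restriction of `Z` to `W × W × W` is symmetric in its first two arguments and vanishes
on the diagonal. -/
theorem gyroscopic_tensor_determined_on_pieces
    (E : Type*) [AddCommGroup E] [Module ℝ E]
    (W What : Submodule ℝ E) (hcompl : IsCompl W What)
    (Y : E →ₗ[ℝ] E →ₗ[ℝ] E →ₗ[ℝ] ℝ)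
    (hYsymm : ∀ a b c : E, Y a b c = Y b a c)
    (Z : E →ₗ[ℝ] E →ₗ[ℝ] E →ₗ[ℝ] ℝ)
    (hZsymm : ∀ a b c : E, Z a b c = Z b a c)
    (hZ0 : ∀ a : E, Z a a a = 0)
    (hZY : ∀ a : E, ∀ σ ∈ What, Z a a σ = Y a a σ) :
    (∀ a1 a2 : E, ∀ σ ∈ What, Z a1 a2 σ = Y a1 a2 σ) ∧
    (∀ σ1 ∈ What, ∀ σ2 ∈ What, ∀ γ ∈ W,
        Z σ1 σ2 γ = -Y γ σ2 σ1 - Y γ σ1 σ2) ∧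
    (∀ γ1 ∈ W, ∀ γ2 ∈ W, ∀ σ ∈ What,
        (-2 * Z γ1 σ γ2 - Y γ1 γ2 σ) = -(-2 * Z γ2 σ γ1 - Y γ2 γ1 σ)) ∧
    (∀ γ1 ∈ W, ∀ γ2 ∈ W, ∀ γ3 ∈ W, Z γ1 γ2 γ3 = Z γ2 γ1 γ3) ∧
    (∀ γ ∈ W, Z γ γ γ = 0) := by
  -- (a)
  have ha : ∀ a1 a2 : E, ∀ σ ∈ What, Z a1 a2 σ = Y a1 a2 σ := by
    intro a1 a2 σ hσ
    have h1 := hZY (a1 + a2) σ hσ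
    have h2 := hZY a1 σ hσ
    have h3 := hZY a2 σ hσ
    simp only [map_add, LinearMap.add_apply] at h1
    linarith [hZsymm a1 a2 σ, hZsymm a2 a1 σ, hYsymm a1 a2 σ, hYsymm a2 a1 σ]
  -- cyclic identity
  have cyc : ∀ a b c : E, Z a b c + Z a c b + Z b c a = 0 := by
    intro a b c
    have h1 := hZ0 (a + b + c)
    have h2 := hZ0 (a + b)
    have h3 := hZ0 (a + c)
    have h4 := hZ0 (b + c)
    have h5 := hZ0 a
    have h6 := hZ0 b
    have h7 := hZ0 c
    simp only [map_add, LinearMap.add_apply] at h1 h2 h3 h4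
    linarith [hZsymm a b c, hZsymm b a c, hZsymm a c b, hZsymm c a b,
      hZsymm b c a, hZsymm c b a]
  refine ⟨ha, ?_, ?_, fun γ1 _ γ2 _ γ3 _ => hZsymm γ1 γ2 γ3, fun γ _ => hZ0 γ⟩
  · intro σ1 hσ1 σ2 hσ2 γ hγ
    have h1 := cyc σ1 σ2 γ
    have h2 := ha γ σ1 σ2 hσ2
    have h3 := ha γ σ2 σ1 hσ1
    linarith [hZsymm σ1 γ σ2, hZsymm γ σ1 σ2, hZsymm σ2 γ σ1, hZsymm γ σ2 σ1]
  · intro γ1 _ γ2 _ σ hσ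
    have h1 := cyc γ1 γ2 σ
    have h2 := ha γ1 γ2 σ hσ
    linarith [hZsymm γ1 σ γ2, hZsymm γ2 σ γ1, hYsymm γ1 γ2 σ]
end

section
/- Let E be a real inner product space, W ⊆ E a complete (e.g. finite-dimensional) subspace, and P : E → E the orthogonal projection onto W. Fix α ∈ E with P(α) ≠ 0. Then for z ∈ E the following are equivalent: (i) z ∈ W and ⟪z, α⟫ ≤ 0; (ii) there exist x ∈ W and μ ∈ ℝ with μ ≥ 0 such that z = x − ((⟪x, P(α)⟫ + μ)/⟪P(α), P(α)⟫) • P(α). -/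
open scoped RealInnerProductSpace

/-! For `z ∈ W` the pairing `⟪z, α⟫` equals `⟪z, P α⟫`, so only `p = P α ∈ W` matters. Formula
(cif) sends `(x, μ)` to a vector of `W` whose pairing with `p` is exactly `-μ`, and every
`z ∈ W` arises this way from `x = z`, `μ = -⟪z, p⟫`. -/

section

variable {E : Type*} [NormedAddCommGroup E] [InnerProductSpace ℝ E]

theorem real_inner_sub_smul_div_inner_self {p : E} (hp : p ≠ 0) (x : E) (μ : ℝ) :
    ⟪x - ((⟪x, p⟫ + μ) / ⟪p, p⟫) • p, p⟫ = -μ := by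
  rw [inner_sub_left, real_inner_smul_left, div_mul_cancel₀ _ (inner_self_ne_zero.mpr hp)]
  ring

theorem Submodule.mem_and_inner_nonpos_iff {W : Submodule ℝ E} {p : E} (hpW : p ∈ W)
    (hp : p ≠ 0) (z : E) :
    (z ∈ W ∧ ⟪z, p⟫ ≤ 0) ↔
      ∃ x ∈ W, ∃ μ : ℝ, 0 ≤ μ ∧ z = x - ((⟪x, p⟫ + μ) / ⟪p, p⟫) • p := by
  constructor
  · rintro ⟨hzW, hz⟩
    exact ⟨z, hzW, -⟪z, p⟫, neg_nonneg.mpr hz, by simp⟩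
  · rintro ⟨x, hxW, μ, hμ, rfl⟩
    refine ⟨W.sub_mem hxW (W.smul_mem _ hpW), ?_⟩
    rw [real_inner_sub_smul_div_inner_self hp]
    exact neg_nonpos.mpr hμ

theorem Submodule.inner_orthogonalProjectionOnto_of_mem_left (W : Submodule ℝ E)
    [CompleteSpace W] {w : E} (hw : w ∈ W) (v : E) :
    ⟪w, (W.orthogonalProjectionOnto v : E)⟫ = ⟪w, v⟫ := by
  rw [← W.coe_inner ⟨w, hw⟩, W.inner_orthogonalProjectionOnto_eq_of_mem_left]

end

/-- pointwise content of Proposition 11, 'stepsiii': for the orthogonal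
projection `P` onto a complete subspace `W` of a real inner product space and a point
`α` with `P α ≠ 0`, a vector `z` lies in `W` with `⟪z, α⟫ ≤ 0` if and only if it is
given by formula (cif): `z = x − ((⟪x, Pα⟫ + μ)/⟪Pα, Pα⟫) • Pα` for some `x ∈ W` and
some `μ ≥ 0`. -/
theorem dissipative_force_characterization
    (E : Type*) [NormedAddCommGroup E] [InnerProductSpace ℝ E]
    (W : Submodule ℝ E) [CompleteSpace W]
    (P : E → E) (hP : ∀ x : E, P x = (W.orthogonalProjection x : E))
    (α : E) (hα : P α ≠ 0) (z : E) :
    (z ∈ W ∧ ⟪z, α⟫ ≤ 0) ↔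
      (∃ x ∈ W, ∃ μ : ℝ, 0 ≤ μ ∧
        z = x - ((⟪x, P α⟫ + μ) / ⟪P α, P α⟫) • P α) := by
  have hPαW : P α ∈ W := hP α ▸ (W.orthogonalProjectionOnto α).2
  rw [← W.mem_and_inner_nonpos_iff hPαW hα]
  refine and_congr_right fun hzW => ?_
  rw [hP, W.inner_orthogonalProjectionOnto_of_mem_left hzW]
end

section
/- Let E be a finite-dimensional real vector space and b : E × E → ℝ a symmetric positive-definite bilinear form. Let W ⊆ E be a subspace and Ŵ := {σ ∈ E : b(σ,w) = 0 for all w ∈ W}. Let Υ : E × E × E → ℝ be trilinear, symmetric in its first two arguments, with Υ(σ,σ,σ) = 0 for all σ ∈ Ŵ. Let Z : E × E × E → ℝ be a trilinear map symmetric in its first two arguments with Z(α,α,α) = 0 for all α ∈ E and Z(α,α,σ) = Υ(α,α,σ) for all α ∈ E, σ ∈ Ŵ. Let μ : E → ℝ satisfy μ(α) ≥ 0 for all α, and let z : E → E satisfy z(0) = 0, b(z(α), α) = −μ(α) for all α ∈ E, and b(z(α), σ) = Υ(α,α,σ) for all α ∈ E and σ ∈ Ŵ. For each α ∈ E let w(α)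 ∈ E be the unique vector with b(w(α), β) = Z(α,α,β) for all β ∈ E, and define z_d(α) := z(α) − w(α). Then: b(z_d(α), α) = −μ(α) ≤ 0 for all α ∈ E, z_d(α) ∈ W for all α ∈ E, and z_d(0) = 0. -/
/-!
The gyroscopic part `w α` carries no power, since `b (w α) α = Z α α α = 0`, and it agrees with
`z α` against every `σ ∈ Ŵ`, since both pair with `σ` to `Υ α α σ`. Hence `z α - w α` is
`b`-orthogonal to `Ŵ`, and in finite dimension the `b`-orthogonal of `Ŵ` is `W` again, because a
positive-definite form is nondegenerate.
-/

namespace LinearMap.BilinForm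

variable {R M : Type*} [CommRing R] [AddCommGroup M] [Module R M] {B : LinearMap.BilinForm R M}

theorem nondegenerate_of_anisotropic (hB : B.IsRefl) (h : ∀ x, B x x = 0 → x = 0) :
    B.Nondegenerate :=
  hB.nondegenerate_iff_separatingLeft.mpr fun x hx => h x (hx x)

theorem mem_of_forall_orthogonal_apply_eq_zero {K V : Type*} [Field K] [AddCommGroup V]
    [Module K V] [FiniteDimensional K V] {B : LinearMap.BilinForm K V} (hB : B.Nondegenerate)
    (hB₀ : B.IsRefl) {W : Submodule K V} {v : V}
    (h : ∀ σ, (∀ w ∈ W, B σ w = 0) → B v σ = 0) : v ∈ W := by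
  rw [← orthogonal_orthogonal hB hB₀ W]
  exact fun σ hσ => hB₀ _ _ <| h σ fun w hw => hB₀ _ _ (hσ w hw)

end LinearMap.BilinForm

theorem lcb_force_decomposes_as_dissipative_plus_gyroscopic_general
    (E : Type*) [AddCommGroup E] [Module ℝ E] [FiniteDimensional ℝ E]
    (b : E →ₗ[ℝ] E →ₗ[ℝ] ℝ)
    (hb_symm : ∀ x y : E, b x y = b y x)
    (hb_pos : ∀ x : E, x ≠ 0 → 0 < b x x)
    (W : Submodule ℝ E)
    (Y : E →ₗ[ℝ] E →ₗ[ℝ] E →ₗ[ℝ] ℝ)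
    (Z : E →ₗ[ℝ] E →ₗ[ℝ] E →ₗ[ℝ] ℝ)
    (hZ0 : ∀ a : E, Z a a a = 0)
    (hZY : ∀ a σ : E, (∀ w ∈ W, b σ w = 0) → Z a a σ = Y a a σ)
    (μ : E → ℝ) (hμ : ∀ a : E, 0 ≤ μ a)
    (z : E → E) (hz0 : z 0 = 0)
    (hz1 : ∀ a : E, b (z a) a = -μ a)
    (hz2 : ∀ a σ : E, (∀ w ∈ W, b σ w = 0) → b (z a) σ = Y a a σ)
    (w : E → E) (hw : ∀ a c : E, b (w a) c = Z a a c) :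
    (∀ a : E, b (z a - w a) a = -μ a ∧ -μ a ≤ 0) ∧
    (∀ a : E, z a - w a ∈ W) ∧
    (z 0 - w 0 = 0) := by
  have hrefl : b.IsRefl := (LinearMap.BilinForm.isSymm_def.mpr hb_symm).isRefl
  have hnd : b.Nondegenerate :=
    LinearMap.BilinForm.nondegenerate_of_anisotropic hrefl fun x hx =>
      by_contra fun hx0 => (hb_pos x hx0).ne' hx
  have hw0 : w 0 = 0 := hnd.1 _ fun c => by simp [hw]
  refine ⟨fun a => ⟨?_, neg_nonpos.mpr (hμ a)⟩, fun a => ?_, by rw [hz0, hw0, sub_zero]⟩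
  · rw [map_sub, LinearMap.sub_apply, hz1, hw, hZ0, sub_zero]
  · refine LinearMap.BilinForm.mem_of_forall_orthogonal_apply_eq_zero hnd hrefl fun σ hσ => ?_
    rw [map_sub, LinearMap.sub_apply, hz2 a σ hσ, hw, hZY a σ hσ, sub_self]

/-- algebraic core of Theorem 14, 'LCBeqCH': with `b` a symmetric
positive-definite bilinear form on a finite-dimensional real space `E`, `W ⊆ E` a
subspace with `b`-orthogonal complement `Ŵ = {σ | ∀ w ∈ W, b σ w = 0}`, `Υ` and `Z`
trilinear tensors as in Chang's construction, `μ ≥ 0`, `z : E → E` a force map of the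
LCB method, and `w(α)` the unique vector with `b(w(α), β) = Z(α,α,β)`, the difference
`z_d(α) = z(α) − w(α)` satisfies the dissipativity conditions (szd):
`b(z_d(α), α) = −μ(α) ≤ 0`, `z_d(α) ∈ W`, and `z_d(0) = 0`. -/
theorem lcb_force_decomposes_as_dissipative_plus_gyroscopic
    (E : Type*) [AddCommGroup E] [Module ℝ E] [FiniteDimensional ℝ E]
    (b : E →ₗ[ℝ] E →ₗ[ℝ] ℝ)
    (hb_symm : ∀ x y : E, b x y = b y x)
    (hb_pos : ∀ x : E, x ≠ 0 → 0 < b x x)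
    (W : Submodule ℝ E)
    (Y : E →ₗ[ℝ] E →ₗ[ℝ] E →ₗ[ℝ] ℝ)
    (hYsymm : ∀ a c d : E, Y a c d = Y c a d)
    (hY0 : ∀ σ : E, (∀ w ∈ W, b σ w = 0) → Y σ σ σ = 0)
    (Z : E →ₗ[ℝ] E →ₗ[ℝ] E →ₗ[ℝ] ℝ)
    (hZsymm : ∀ a c d : E, Z a c d = Z c a d)
    (hZ0 : ∀ a : E, Z a a a = 0)
    (hZY : ∀ a σ : E, (∀ w ∈ W, b σ w = 0) → Z a a σ = Y a a σ)
    (μ : E → ℝ) (hμ : ∀ a : E, 0 ≤ μ a)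
    (z : E → E) (hz0 : z 0 = 0)
    (hz1 : ∀ a : E, b (z a) a = -μ a)
    (hz2 : ∀ a σ : E, (∀ w ∈ W, b σ w = 0) → b (z a) σ = Y a a σ)
    (w : E → E) (hw : ∀ a c : E, b (w a) c = Z a a c) :
    (∀ a : E, b (z a - w a) a = -μ a ∧ -μ a ≤ 0) ∧
    (∀ a : E, z a - w a ∈ W) ∧
    (z 0 - w 0 = 0) :=
  lcb_force_decomposes_as_dissipative_plus_gyroscopic_general E b hb_symm hb_pos W Y Z hZ0 hZY μ hμ
    z hz0 hz1 hz2 w hw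
end
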